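/- Full statement of Lemma 2 (bias bound): assume $X = \Gamma^T H + E$ with $\mathbb{E}[H]=0$, $\mathbb{E}[HH^T]=I_q$, $\mathbb{E}[E]=0$, $\mathbb{E}[HE^T]=0$, $\Sigma_E = \mathbb{E}[EE^T]$ symmetric positive definite, and $\Gamma \in \mathbb{R}^{q \times p}$ with smallest singular value $\lambda_{\min}(\Gamma) > 0$. Let $b = (\Gamma^T\Gamma + \Sigma_E)^{-1}\Gamma^T\delta$. Then $\mathbb{E}[(H^T\delta - X^Tb)^2] = \delta^T (I_q + \Gamma\Sigma_E^{-1}\Gamma^T)^{-1}\delta \leq \|\delta\|_2^2 \lambda_{\max}(\Sigma_E)\lambda_{\min}(\Gamma)^{-2}$. -/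

import Mathlib

/-! The residual is `(δ - Γ b)ᵀ H - bᵀ E`, so the moment conditions make its second moment
`‖c‖² + bᵀ Σ_E b` with `c = δ - Γ b`. The normal equations `(ΓᵀΓ + Σ_E) b = Γᵀ δ` give
`Σ_E b = Γᵀ c` and turn this into `δᵀ c`, while the Woodbury identity
`(I + Γ Σ_E⁻¹ Γᵀ)⁻¹ = I - Γ (ΓᵀΓ + Σ_E)⁻¹ Γᵀ` identifies `c` with `(I + Γ Σ_E⁻¹ Γᵀ)⁻¹ δ`.
For the bound, `σ² ‖c‖² ≤ ‖Γᵀ c‖² = ‖Σ_E b‖² ≤ λ_max bᵀ Σ_E b`, and Cauchy–Schwarz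
`(δᵀ c)² ≤ ‖δ‖² ‖c‖²` with `δᵀ c = ‖c‖² + bᵀ Σ_E b` gives `σ² δᵀ c ≤ λ_max ‖δ‖²`. -/

open Matrix MeasureTheory

section Moments

variable {Ω : Type*} [MeasurableSpace Ω] {μ : Measure Ω} {m n : Type*} [Fintype m] [Fintype n]

noncomputable def crossMoment (μ : Measure Ω) (F : Ω → m → ℝ) (G : Ω → n → ℝ) : Matrix m n ℝ :=
  of fun i j => ∫ ω, F ω i * G ω j ∂μ

theorem memLp_dotProduct {p : ENNReal} {F : Ω → n → ℝ} (hF : ∀ i, MemLp (fun ω => F ω i) p μ)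
    (c : n → ℝ) : MemLp (fun ω => c ⬝ᵥ F ω) p μ :=
  memLp_finsetSum _ fun i _ => (hF i).const_mul (c i)

theorem integral_dotProduct_mul_dotProduct {F : Ω → m → ℝ} {G : Ω → n → ℝ}
    (hF : ∀ i, MemLp (fun ω => F ω i) 2 μ) (hG : ∀ j, MemLp (fun ω => G ω j) 2 μ)
    (c : m → ℝ) (d : n → ℝ) :
    ∫ ω, (c ⬝ᵥ F ω) * (d ⬝ᵥ G ω) ∂μ = c ⬝ᵥ crossMoment μ F G *ᵥ d := by
  have hFG i j : Integrable (fun ω => c i * (F ω i * G ω j) * d j) μ :=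
    (((hF i).integrable_mul (hG j)).const_mul (c i)).mul_const (d j)
  have hexpand ω : (c ⬝ᵥ F ω) * (d ⬝ᵥ G ω) = ∑ i, ∑ j, c i * (F ω i * G ω j) * d j := by
    simp only [dotProduct, Finset.sum_mul_sum]
    exact Finset.sum_congr rfl fun i _ => Finset.sum_congr rfl fun j _ => by ring
  simp only [hexpand]
  rw [integral_finsetSum _ fun i _ => integrable_finsetSum _ fun j _ => hFG i j]
  refine Finset.sum_congr rfl fun i _ => ?_
  rw [integral_finsetSum _ fun j _ => hFG i j]
  simp only [integral_mul_const, integral_const_mul]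
  simp only [mulVec, dotProduct, crossMoment, of_apply, Finset.mul_sum, mul_assoc]

theorem integral_sub_sq {f g : Ω → ℝ} (hf : MemLp f 2 μ) (hg : MemLp g 2 μ) :
    ∫ ω, (f ω - g ω) ^ 2 ∂μ = ∫ ω, f ω * f ω ∂μ - 2 * ∫ ω, f ω * g ω ∂μ + ∫ ω, g ω * g ω ∂μ := by
  have hff : Integrable (fun ω => f ω * f ω) μ := hf.integrable_mul hf
  have hfg : Integrable (fun ω => 2 * (f ω * g ω)) μ := (hf.integrable_mul hg).const_mul 2
  have hgg : Integrable (fun ω => g ω * g ω) μ := hg.integrable_mul hg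
  calc ∫ ω, (f ω - g ω) ^ 2 ∂μ = ∫ ω, f ω * f ω - 2 * (f ω * g ω) + g ω * g ω ∂μ := by
        congr with ω; ring
    _ = _ := by
        rw [integral_add _ hgg, integral_sub hff hfg, integral_const_mul]
        exact hff.sub hfg

theorem integral_sq_dotProduct_sub_dotProduct {F : Ω → m → ℝ} {G : Ω → n → ℝ}
    (hF : ∀ i, MemLp (fun ω => F ω i) 2 μ) (hG : ∀ j, MemLp (fun ω => G ω j) 2 μ)
    (c : m → ℝ) (d : n → ℝ) :
    ∫ ω, (c ⬝ᵥ F ω - d ⬝ᵥ G ω) ^ 2 ∂μ = c ⬝ᵥ crossMoment μ F F *ᵥ c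
      - 2 * c ⬝ᵥ crossMoment μ F G *ᵥ d + d ⬝ᵥ crossMoment μ G G *ᵥ d := by
  rw [integral_sub_sq (memLp_dotProduct hF c) (memLp_dotProduct hG d),
    integral_dotProduct_mul_dotProduct hF hF, integral_dotProduct_mul_dotProduct hF hG,
    integral_dotProduct_mul_dotProduct hG hG]

end Moments

namespace Matrix

variable {m n R : Type*} [Fintype m] [Fintype n]

theorem one_add_mul_inv_mul_inv_eq_sub [DecidableEq m] [DecidableEq n] [CommRing R]
    (U : Matrix m n R) (C : Matrix n n R) (V : Matrix n m R)
    (hC : IsUnit C) (hVUC : IsUnit (V * U + C)) :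
    (1 + U * C⁻¹ * V)⁻¹ = 1 - U * (V * U + C)⁻¹ * V := by
  have hCC : C⁻¹⁻¹ = C := nonsing_inv_nonsing_inv C ((isUnit_iff_isUnit_det C).1 hC)
  rw [add_mul_mul_inv_eq_sub 1 U C⁻¹ V isUnit_one (isUnit_nonsing_inv_iff.2 hC)
    (by rwa [hCC, inv_one, Matrix.mul_one, add_comm])]
  simp [hCC, add_comm]

section NormalEquation

variable [CommRing R] {Γ : Matrix m n R} {S : Matrix n n R} {δ : m → R} {b : n → R}

theorem mulVec_eq_transpose_mulVec_sub_mulVec (h : (Γᵀ * Γ + S) *ᵥ b = Γᵀ *ᵥ δ) :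
    S *ᵥ b = Γᵀ *ᵥ (δ - Γ *ᵥ b) := by
  rw [mulVec_sub, ← h, add_mulVec, ← mulVec_mulVec, add_sub_cancel_left]

theorem sub_mulVec_dotProduct_add_dotProduct_mulVec (h : (Γᵀ * Γ + S) *ᵥ b = Γᵀ *ᵥ δ) :
    (δ - Γ *ᵥ b) ⬝ᵥ (δ - Γ *ᵥ b) + b ⬝ᵥ S *ᵥ b = δ ⬝ᵥ (δ - Γ *ᵥ b) := by
  rw [mulVec_eq_transpose_mulVec_sub_mulVec h, mulVec_transpose, dotProduct_comm b,
    ← dotProduct_mulVec, dotProduct_comm _ (Γ *ᵥ b), ← add_dotProduct, sub_add_cancel]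

end NormalEquation

theorem PosSemidef.mulVec_dotProduct_mulVec_le {A : Matrix n n ℝ} (hA : A.PosSemidef) {L : ℝ}
    (hL : ∀ x, x ⬝ᵥ A *ᵥ x ≤ L * (x ⬝ᵥ x)) (x : n → ℝ) :
    (A *ᵥ x) ⬝ᵥ (A *ᵥ x) ≤ L * (x ⬝ᵥ A *ᵥ x) := by
  classical
  set y := A *ᵥ x
  have hxy : x ⬝ᵥ A *ᵥ y = y ⬝ᵥ y := by
    rw [dotProduct_mulVec, ← mulVec_transpose, (isHermitian_iff_isSymm.1 hA.isHermitian).eq]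
  have hCS : (x ⬝ᵥ A *ᵥ y) * (y ⬝ᵥ A *ᵥ x) ≤ (x ⬝ᵥ A *ᵥ x) * (y ⬝ᵥ A *ᵥ y) := by
    simpa only [toLinearMap₂'_apply'] using
      LinearMap.BilinForm.apply_mul_apply_le_of_forall_zero_le (toLinearMap₂' ℝ A)
        (by simpa only [toLinearMap₂'_apply', star_trivial] using hA.dotProduct_mulVec_nonneg) x y
  rw [hxy] at hCS
  rcases eq_or_ne y 0 with hy | hy
  · simp [hy]
  · have hyy : 0 < y ⬝ᵥ y := by simpa using dotProduct_star_self_pos_iff.2 hy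
    have hxAx : 0 ≤ x ⬝ᵥ A *ᵥ x := by simpa using hA.dotProduct_mulVec_nonneg x
    nlinarith [hL y]

theorem dotProduct_sub_mulVec_le_of_normal_eq {Γ : Matrix m n ℝ} {S : Matrix n n ℝ} {δ : m → ℝ}
    {b : n → ℝ} {σ L : ℝ} (hS : S.PosDef) (hσ : 0 < σ)
    (hΓ : ∀ x, σ ^ 2 * (x ⬝ᵥ x) ≤ x ⬝ᵥ (Γ * Γᵀ) *ᵥ x) (hL : ∀ x, x ⬝ᵥ S *ᵥ x ≤ L * (x ⬝ᵥ x))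
    (h : (Γᵀ * Γ + S) *ᵥ b = Γᵀ *ᵥ δ) :
    δ ⬝ᵥ (δ - Γ *ᵥ b) ≤ (δ ⬝ᵥ δ) * L * (σ ^ 2)⁻¹ := by
  set c := δ - Γ *ᵥ b
  have hSb : S *ᵥ b = Γᵀ *ᵥ c := mulVec_eq_transpose_mulVec_sub_mulVec h
  have hsplit : c ⬝ᵥ c + b ⬝ᵥ S *ᵥ b = δ ⬝ᵥ c := sub_mulVec_dotProduct_add_dotProduct_mulVec h
  rcases eq_or_ne c 0 with hc | hc
  · have hb : b = 0 := by
      by_contra hb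
      simpa [hSb, hc] using hS.dotProduct_mulVec_pos hb
    have hδ : δ = 0 := by simpa [c, hb] using hc
    simp [hδ]
  have hCS : (δ ⬝ᵥ c) ^ 2 ≤ (δ ⬝ᵥ δ) * (c ⬝ᵥ c) := by
    simpa only [dotProduct, sq] using Finset.sum_mul_sq_le_sq_mul_sq Finset.univ δ c
  set N := c ⬝ᵥ c
  set Q := b ⬝ᵥ S *ᵥ b
  have hN : 0 < N := by simpa using dotProduct_star_self_pos_iff.2 hc
  have hQ : 0 ≤ Q := by simpa using hS.posSemidef.dotProduct_mulVec_nonneg b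
  have hNQ : σ ^ 2 * N ≤ L * Q := calc
    σ ^ 2 * N ≤ c ⬝ᵥ (Γ * Γᵀ) *ᵥ c := hΓ c
    _ = (S *ᵥ b) ⬝ᵥ (S *ᵥ b) := by
      rw [hSb, ← mulVec_mulVec, dotProduct_mulVec, ← mulVec_transpose]
    _ ≤ L * Q := hS.posSemidef.mulVec_dotProduct_mulVec_le hL b
  rw [← hsplit] at hCS ⊢
  have hD : 0 ≤ δ ⬝ᵥ δ := by nlinarith
  have hLpos : 0 < L := by nlinarith [mul_pos (pow_pos hσ 2) hN]
  rw [← div_eq_mul_inv, le_div_iff₀ (by positivity)]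
  refine le_of_mul_le_mul_right ?_ (by positivity : 0 < N + Q)
  calc (N + Q) * σ ^ 2 * (N + Q) ≤ (δ ⬝ᵥ δ) * (σ ^ 2 * N) := by nlinarith
    _ ≤ (δ ⬝ᵥ δ) * (L * Q) := by gcongr
    _ ≤ (δ ⬝ᵥ δ) * L * (N + Q) := by nlinarith

end Matrix

theorem confounding_bias_identity_and_bound_general
    {Ω : Type*} [MeasurableSpace Ω] (μ : Measure Ω)
    (p q : ℕ)
    (H : Ω → Fin q → ℝ) (Ev : Ω → Fin p → ℝ)
    (hHm : ∀ i, MemLp (fun ω => H ω i) 2 μ)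
    (hEm : ∀ i, MemLp (fun ω => Ev ω i) 2 μ)
    (hHH : ∀ i j, ∫ ω, H ω i * H ω j ∂μ = (1 : Matrix (Fin q) (Fin q) ℝ) i j)
    (hHE : ∀ i j, ∫ ω, H ω i * Ev ω j ∂μ = 0)
    (SE : Matrix (Fin p) (Fin p) ℝ) (hSE : SE.PosDef)
    (hEE : ∀ i j, ∫ ω, Ev ω i * Ev ω j ∂μ = SE i j)
    (Γ : Matrix (Fin q) (Fin p) ℝ)
    (σmin lmax : ℝ) (hσ : 0 < σmin)
    (hΓ : ∀ x : Fin q → ℝ, σmin ^ 2 * (∑ i, x i ^ 2) ≤ x ⬝ᵥ (Γ * Γᵀ).mulVec x)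
    (hlmax : ∀ x : Fin p → ℝ, x ⬝ᵥ SE.mulVec x ≤ lmax * ∑ i, x i ^ 2)
    (X : Ω → Fin p → ℝ) (hX : X = fun ω => Γᵀ.mulVec (H ω) + Ev ω)
    (δ : Fin q → ℝ) (b : Fin p → ℝ)
    (hb : b = (Γᵀ * Γ + SE)⁻¹.mulVec (Γᵀ.mulVec δ)) :
    (∫ ω, (δ ⬝ᵥ H ω - X ω ⬝ᵥ b) ^ 2 ∂μ
        = δ ⬝ᵥ (((1 : Matrix (Fin q) (Fin q) ℝ) + Γ * SE⁻¹ * Γᵀ)⁻¹.mulVec δ)) ∧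
    δ ⬝ᵥ (((1 : Matrix (Fin q) (Fin q) ℝ) + Γ * SE⁻¹ * Γᵀ)⁻¹.mulVec δ)
      ≤ (∑ i, δ i ^ 2) * lmax * (σmin ^ 2)⁻¹ := by
  have hsq {k : ℕ} (x : Fin k → ℝ) : ∑ i, x i ^ 2 = x ⬝ᵥ x := by simp [dotProduct, sq]
  have hM : IsUnit (Γᵀ * Γ + SE) := by
    simpa using (PosDef.posSemidef_add (posSemidef_conjTranspose_mul_self Γ) hSE).isUnit
  have hnormal : (Γᵀ * Γ + SE) *ᵥ b = Γᵀ *ᵥ δ := by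
    rw [hb, mulVec_mulVec, mul_nonsing_inv _ ((isUnit_iff_isUnit_det _).1 hM), one_mulVec]
  have hresid : δ - Γ *ᵥ b = (1 + Γ * SE⁻¹ * Γᵀ)⁻¹ *ᵥ δ := by
    rw [one_add_mul_inv_mul_inv_eq_sub Γ SE Γᵀ hSE.isUnit hM, sub_mulVec, one_mulVec, hb,
      mulVec_mulVec, mulVec_mulVec, Matrix.mul_assoc]
  have hpt ω : δ ⬝ᵥ H ω - X ω ⬝ᵥ b = (δ - Γ *ᵥ b) ⬝ᵥ H ω - b ⬝ᵥ Ev ω := by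
    rw [hX, add_dotProduct, sub_dotProduct, mulVec_transpose, ← dotProduct_mulVec,
      dotProduct_comm (Ev ω), dotProduct_comm (H ω)]
    ring
  rw [← hresid]
  refine ⟨?_, ?_⟩
  · have hHH' : crossMoment μ H H = 1 := ext hHH
    have hHE' : crossMoment μ H Ev = 0 := ext hHE
    have hEE' : crossMoment μ Ev Ev = SE := ext hEE
    simp only [hpt, integral_sq_dotProduct_sub_dotProduct hHm hEm, hHH', hHE', hEE', one_mulVec,
      zero_mulVec, dotProduct_zero, mul_zero, sub_zero]
    exact sub_mulVec_dotProduct_add_dotProduct_mulVec hnormal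
  · rw [hsq]
    exact dotProduct_sub_mulVec_le_of_normal_eq hSE hσ (by simpa only [hsq] using hΓ)
      (by simpa only [hsq] using hlmax) hnormal

/-- Full bias bound (Lemma 2): in the confounding model `X = Γᵀ H + E` with `E[H]=0`,
`E[HHᵀ]=I_q`, `E[E]=0`, `E[HEᵀ]=0`, `Σ_E = E[EEᵀ]` symmetric positive definite, smallest
singular value `σmin > 0` of `Γ` (Rayleigh characterization `σmin² ‖x‖² ≤ xᵀ Γ Γᵀ x`), largest
eigenvalue `lmax` of `Σ_E` (`xᵀ Σ_E x ≤ lmax ‖x‖²`), and `b = (ΓᵀΓ + Σ_E)⁻¹ Γᵀ δ`: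
`E[(Hᵀδ - Xᵀb)²] = δᵀ (I_q + Γ Σ_E⁻¹ Γᵀ)⁻¹ δ ≤ ‖δ‖² lmax σmin⁻²`. -/
theorem confounding_bias_identity_and_bound
    {Ω : Type*} [MeasurableSpace Ω] (μ : Measure Ω) [IsProbabilityMeasure μ]
    (p q : ℕ) (hqp : q ≤ p)
    (H : Ω → Fin q → ℝ) (Ev : Ω → Fin p → ℝ)
    (hHm : ∀ i, MemLp (fun ω => H ω i) 2 μ)
    (hEm : ∀ i, MemLp (fun ω => Ev ω i) 2 μ)
    (hHmean : ∀ i, ∫ ω, H ω i ∂μ = 0)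
    (hEmean : ∀ i, ∫ ω, Ev ω i ∂μ = 0)
    (hHH : ∀ i j, ∫ ω, H ω i * H ω j ∂μ = (1 : Matrix (Fin q) (Fin q) ℝ) i j)
    (hHE : ∀ i j, ∫ ω, H ω i * Ev ω j ∂μ = 0)
    (SE : Matrix (Fin p) (Fin p) ℝ) (hSE : SE.PosDef)
    (hEE : ∀ i j, ∫ ω, Ev ω i * Ev ω j ∂μ = SE i j)
    (Γ : Matrix (Fin q) (Fin p) ℝ)
    (σmin lmax : ℝ) (hσ : 0 < σmin)
    (hΓ : ∀ x : Fin q → ℝ, σmin ^ 2 * (∑ i, x i ^ 2) ≤ x ⬝ᵥ (Γ * Γᵀ).mulVec x)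
    (hlmax : ∀ x : Fin p → ℝ, x ⬝ᵥ SE.mulVec x ≤ lmax * ∑ i, x i ^ 2)
    (X : Ω → Fin p → ℝ) (hX : X = fun ω => Γᵀ.mulVec (H ω) + Ev ω)
    (δ : Fin q → ℝ) (b : Fin p → ℝ)
    (hb : b = (Γᵀ * Γ + SE)⁻¹.mulVec (Γᵀ.mulVec δ)) :
    (∫ ω, (δ ⬝ᵥ H ω - X ω ⬝ᵥ b) ^ 2 ∂μ
        = δ ⬝ᵥ (((1 : Matrix (Fin q) (Fin q) ℝ) + Γ * SE⁻¹ * Γᵀ)⁻¹.mulVec δ)) ∧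
    δ ⬝ᵥ (((1 : Matrix (Fin q) (Fin q) ℝ) + Γ * SE⁻¹ * Γᵀ)⁻¹.mulVec δ)
      ≤ (∑ i, δ i ^ 2) * lmax * (σmin ^ 2)⁻¹ :=
  confounding_bias_identity_and_bound_general μ p q H Ev hHm hEm hHH hHE SE hSE hEE Γ σmin lmax hσ
    hΓ hlmax X hX δ b hb
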